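/- Let n ≥ 1, let C ⊆ 𝔽₃ⁿ, and let H₀ ⊆ 𝔽₃ⁿ be an affine hyperplane with C ∩ H₀ = ∅. Let H₁, H₂ be the two affine hyperplanes parallel to H₀ and suppose that for i = 1, 2 there is an affine bijection φᵢ : 𝔽₃ⁿ⁻¹ → Hᵢ such that φᵢ⁻¹(C ∩ Hᵢ) is a greedy capset in 𝔽₃ⁿ⁻¹. Then C is a greedy capset in 𝔽₃ⁿ. -/

import Mathlib

/-- A line in `𝔽₃ⁿ`: a coset of a one-dimensional linear subspace. -/
def IsLine {n : ℕ} (L : Set (Fin n → ZMod 3)) : Prop :=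
  ∃ p v : Fin n → ZMod 3, v ≠ 0 ∧ L = {x | ∃ t : ZMod 3, x = p + t • v}

/-- A capset: a subset of `𝔽₃ⁿ` containing no line. -/
def IsCapset {n : ℕ} (C : Set (Fin n → ZMod 3)) : Prop :=
  ∀ L : Set (Fin n → ZMod 3), IsLine L → ¬ L ⊆ C

/-- `lineDeg S P`: the number of lines through `P` that are contained in `S`. -/
noncomputable def lineDeg {n : ℕ} (S : Set (Fin n → ZMod 3)) (P : Fin n → ZMod 3) : ℕ :=
  Set.ncard {L : Set (Fin n → ZMod 3) | IsLine L ∧ P ∈ L ∧ L ⊆ S}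

/-- The sequence of sets in a greedy construction removing the points `P 0, P 1, …`. -/
def greedySeq {n : ℕ} (P : ℕ → (Fin n → ZMod 3)) : ℕ → Set (Fin n → ZMod 3)
  | 0 => Set.univ
  | (i+1) => greedySeq P i \ {P i}

/-- A greedy capset: a capset obtained from `𝔽₃ⁿ` by successively removing a point whose
number of lines through it contained in the remaining set is positive and maximal,
until the remaining set is a capset. -/
def IsGreedyCapset {n : ℕ} (C : Set (Fin n → ZMod 3)) : Prop :=
  ∃ (k : ℕ) (P : ℕ → (Fin n → ZMod 3)),
    (∀ i < k, P i ∈ greedySeq P i ∧ 0 < lineDeg (greedySeq P i) (P i) ∧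
      ∀ Q ∈ greedySeq P i, lineDeg (greedySeq P i) Q ≤ lineDeg (greedySeq P i) (P i)) ∧
    C = greedySeq P k ∧ IsCapset C

/-- An affine hyperplane in `𝔽₃ⁿ`: the solution set of one nontrivial linear equation. -/
def IsHyperplane {n : ℕ} (H : Set (Fin n → ZMod 3)) : Prop :=
  ∃ (a : Fin n → ZMod 3) (b : ZMod 3), a ≠ 0 ∧ H = {x | ∑ i, a i * x i = b}

/-- `H₀, H₁, H₂` form a triple of parallel affine hyperplanes partitioning `𝔽₃ⁿ`
(`H₁` and `H₂` are the two hyperplanes parallel to `H₀`). -/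
def ParallelTriple {n : ℕ} (H₀ H₁ H₂ : Set (Fin n → ZMod 3)) : Prop :=
  ∃ (a : Fin n → ZMod 3) (b : ZMod 3), a ≠ 0 ∧
    H₀ = {x | ∑ i, a i * x i = b} ∧
    H₁ = {x | ∑ i, a i * x i = b + 1} ∧
    H₂ = {x | ∑ i, a i * x i = b + 2}

/-!
Remove the points of `H₀` first, always taking a remaining point of `H₀` of maximal degree.
For `Q ∉ H₀` the lines through `Q` are those inside the hyperplane of `Q` plus at most one
transversal line per surviving point of `H₀`, while a surviving `P ∈ H₀` keeps all its
`|H₁| = |H₀|` transversal lines, and loses at most one line inside `H₀` per removed point; since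
all points have equally many lines inside their own hyperplane, `P` has maximal degree.
Once `H₀` is gone, every line of the remaining set lies in `H₁` or in `H₂`, so degrees are
computed inside each hyperplane and the two greedy constructions transported by `φ₁, φ₂` can be
interleaved, always taking the step of larger degree.
-/

open Set Relation

local notation "𝔽₃^" n:max => Fin n → ZMod 3

section AffineLine

variable {k V W : Type*} [Field k] [AddCommGroup V] [Module k V] [AddCommGroup W] [Module k W]

lemma AffineMap.image_affineSpan_pair (φ : V →ᵃ[k] W) (P Q : V) :
    φ '' line[k, P, Q] = line[k, φ P, φ Q] := by
  rw [← AffineSubspace.coe_map, AffineSubspace.map_span, image_pair]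

lemma coe_affineSpan_pair_eq_univ {s u : k} (h : s ≠ u) : (line[k, s, u] : Set k) = univ := by
  refine eq_univ_of_forall fun c ↦ mem_affineSpan_pair_iff_exists_lineMap_eq.2
    ⟨(c - s) / (u - s), ?_⟩
  rw [AffineMap.lineMap_apply_ring', div_mul_cancel₀ _ (sub_ne_zero.2 h.symm), sub_add_cancel]

lemma injOn_affineSpan_pair (f : V →ᵃ[k] W) {P Q : V} (h : f P ≠ f Q) :
    InjOn f line[k, P, Q] := by
  rintro x hx y hy hxy
  obtain ⟨r, rfl⟩ := mem_affineSpan_pair_iff_exists_lineMap_eq.1 hx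
  obtain ⟨s, rfl⟩ := mem_affineSpan_pair_iff_exists_lineMap_eq.1 hy
  rw [AffineMap.apply_lineMap, AffineMap.apply_lineMap] at hxy
  rw [AffineMap.lineMap_injective k h hxy]

lemma ncard_fiber_eq {f : V →ₗ[k] k} (hf : Function.Surjective f) (c c' : k) :
    (f ⁻¹' {c}).ncard = (f ⁻¹' {c'}).ncard := by
  obtain ⟨w, hw⟩ := hf (c' - c)
  have htranslate : (· + w) '' (f ⁻¹' {c}) = f ⁻¹' {c'} := by
    ext x
    simp only [mem_image, mem_preimage, mem_singleton_iff]
    constructor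
    · rintro ⟨y, hy, rfl⟩
      rw [map_add, hy, hw, add_sub_cancel]
    · intro hx
      exact ⟨x - w, by rw [map_sub, hx, hw, sub_sub_cancel], sub_add_cancel x w⟩
  rw [← htranslate, ncard_image_of_injective _ (add_left_injective w)]

end AffineLine

section Lines

variable {m n : ℕ}

lemma isLine_iff {L : Set (𝔽₃^n)} :
    IsLine L ↔ ∃ P Q : 𝔽₃^n, P ≠ Q ∧ L = (line[ZMod 3, P, Q] : Set (𝔽₃^n)) := by
  have hparam (p v : 𝔽₃^n) :
      (line[ZMod 3, p, v + p] : Set _) = {x | ∃ t : ZMod 3, x = p + t • v} := by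
    ext x
    simp [mem_affineSpan_pair_iff_exists_lineMap_eq, AffineMap.lineMap_apply, eq_comm, add_comm]
  constructor
  · rintro ⟨p, v, hv, rfl⟩
    exact ⟨p, v + p, by simpa [eq_comm] using hv, (hparam p v).symm⟩
  · rintro ⟨P, Q, hPQ, rfl⟩
    refine ⟨P, Q - P, sub_ne_zero.2 hPQ.symm, ?_⟩
    rw [← hparam, sub_add_cancel]

lemma isLine_affineSpan_pair {P Q : 𝔽₃^n} (h : P ≠ Q) :
    IsLine (line[ZMod 3, P, Q] : Set (𝔽₃^n)) :=
  isLine_iff.2 ⟨P, Q, h, rfl⟩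

lemma IsLine.eq_affineSpan_pair {L : Set (𝔽₃^n)} (hL : IsLine L) {P Q : 𝔽₃^n}
    (hP : P ∈ L) (hQ : Q ∈ L) (h : P ≠ Q) : L = (line[ZMod 3, P, Q] : Set (𝔽₃^n)) := by
  obtain ⟨A, B, -, rfl⟩ := isLine_iff.1 hL
  rw [affineSpan_pair_eq_of_mem_of_mem_of_ne hP hQ h]

lemma IsLine.nonempty {L : Set (𝔽₃^n)} (hL : IsLine L) : L.Nonempty := by
  obtain ⟨P, Q, -, rfl⟩ := isLine_iff.1 hL
  exact ⟨P, left_mem_affineSpan_pair _ _ _⟩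

lemma IsLine.image {φ : 𝔽₃^m →ᵃ[ZMod 3] 𝔽₃^n} (hφ : Function.Injective φ)
    {L : Set (𝔽₃^m)} (hL : IsLine L) : IsLine (φ '' L) := by
  obtain ⟨P, Q, hPQ, rfl⟩ := isLine_iff.1 hL
  rw [φ.image_affineSpan_pair]
  exact isLine_affineSpan_pair (hφ.ne hPQ)

lemma IsLine.preimage {φ : 𝔽₃^m →ᵃ[ZMod 3] 𝔽₃^n}
    (hφ : Function.Injective φ) {L : Set (𝔽₃^n)} (hL : IsLine L) (hLφ : L ⊆ range φ) :
    IsLine (φ ⁻¹' L) := by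
  obtain ⟨P, Q, hPQ, rfl⟩ := isLine_iff.1 hL
  obtain ⟨P', rfl⟩ := hLφ (left_mem_affineSpan_pair _ _ _)
  obtain ⟨Q', rfl⟩ := hLφ (right_mem_affineSpan_pair _ _ _)
  rw [← φ.image_affineSpan_pair, preimage_image_eq _ hφ]
  exact isLine_affineSpan_pair (ne_of_apply_ne φ hPQ)

lemma IsLine.subset_fiber_or_surjOn (f : 𝔽₃^n →ₗ[ZMod 3] ZMod 3)
    {L : Set (𝔽₃^n)} (hL : IsLine L) {R : 𝔽₃^n} (hR : R ∈ L) :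
    L ⊆ f ⁻¹' {f R} ∨ SurjOn f L univ := by
  obtain ⟨P, Q, -, rfl⟩ := isLine_iff.1 hL
  have himage := f.toAffineMap.image_affineSpan_pair P Q
  simp only [LinearMap.coe_toAffineMap] at himage
  by_cases h : f P = f Q
  · left
    have hconst : ∀ x ∈ line[ZMod 3, P, Q], f x = f P := fun x hx ↦ by
      have hx' := mem_image_of_mem f hx
      rwa [himage, ← h, pair_eq_singleton, AffineSubspace.coe_affineSpan_singleton] at hx'
    intro x hx
    rw [mem_preimage, mem_singleton_iff, hconst x hx, hconst R hR]
  · right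
    rw [SurjOn, himage, coe_affineSpan_pair_eq_univ h]

end Lines

section LineDeg

variable {m n : ℕ}

lemma lineDeg_image {φ : 𝔽₃^m →ᵃ[ZMod 3] 𝔽₃^n} (hφ : Function.Injective φ)
    (A : Set (𝔽₃^m)) (y : 𝔽₃^m) : lineDeg (φ '' A) (φ y) = lineDeg A y := by
  have hlines : {L | IsLine L ∧ φ y ∈ L ∧ L ⊆ φ '' A} =
      image φ '' {M | IsLine M ∧ y ∈ M ∧ M ⊆ A} := by
    ext L
    constructor
    · rintro ⟨hL, hyL, hLA⟩
      have hLφ : L ⊆ range φ := hLA.trans (image_subset_range φ A)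
      refine ⟨φ ⁻¹' L, ⟨hL.preimage hφ hLφ, hyL, ?_⟩, image_preimage_eq_of_subset hLφ⟩
      rw [← preimage_image_eq A hφ]
      exact preimage_mono hLA
    · rintro ⟨M, ⟨hM, hyM, hMA⟩, rfl⟩
      exact ⟨hM.image hφ, mem_image_of_mem φ hyM, image_mono hMA⟩
  rw [lineDeg, lineDeg, hlines, ncard_image_of_injective _ (image_injective.2 hφ)]

lemma lineDeg_fiber_eq (f : 𝔽₃^n →ₗ[ZMod 3] ZMod 3) (P Q : 𝔽₃^n) :
    lineDeg (f ⁻¹' {f P}) P = lineDeg (f ⁻¹' {f Q}) Q := by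
  let τ := (AffineEquiv.constVAdd (ZMod 3) (𝔽₃^n) (Q - P)).toAffineMap
  have hτ (x : 𝔽₃^n) : τ x = Q - P + x := rfl
  have hfiber : τ '' (f ⁻¹' {f P}) = f ⁻¹' {f Q} := by
    ext x
    simp only [mem_image, mem_preimage, mem_singleton_iff, hτ]
    constructor
    · rintro ⟨y, hy, rfl⟩
      rw [map_add, map_sub, hy, sub_add_cancel]
    · intro hx
      exact ⟨x - (Q - P), by rw [map_sub, map_sub, hx, sub_sub_cancel], add_sub_cancel _ _⟩
  have hτinj : Function.Injective τ := add_right_injective (Q - P)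
  rw [← hfiber, show Q = τ P from (sub_add_cancel Q P).symm, lineDeg_image hτinj]

lemma isCapset_iff_lineDeg_eq_zero {S : Set (𝔽₃^n)} :
    IsCapset S ↔ ∀ P ∈ S, lineDeg S P = 0 := by
  simp only [lineDeg, ncard_eq_zero (toFinite _), eq_empty_iff_forall_notMem, mem_ofPred_eq,
    not_and]
  constructor
  · exact fun hS _ _ L hL _ hLS ↦ hS L hL hLS
  · intro h L hL hLS
    obtain ⟨P, hP⟩ := hL.nonempty
    exact h P (hLS hP) L hL hP hLS

lemma IsCapset.image {φ : 𝔽₃^m →ᵃ[ZMod 3] 𝔽₃^n}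
    (hφ : Function.Injective φ) {A : Set (𝔽₃^m)} (hA : IsCapset A) :
    IsCapset (φ '' A) := by
  rw [isCapset_iff_lineDeg_eq_zero] at hA ⊢
  rintro _ ⟨y, hy, rfl⟩
  rw [lineDeg_image hφ, hA y hy]

lemma lineDeg_le_lineDeg_add_ncard {S T X : Set (𝔽₃^n)} {P : 𝔽₃^n}
    (h : ∀ L, IsLine L → P ∈ L → L ⊆ S → ¬ L ⊆ T → ∃ R ∈ X, R ≠ P ∧ R ∈ L) :
    lineDeg S P ≤ lineDeg T P + X.ncard := by
  have hsub : {L | IsLine L ∧ P ∈ L ∧ L ⊆ S} ⊆ {L | IsLine L ∧ P ∈ L ∧ L ⊆ T} ∪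
      (fun R ↦ (line[ZMod 3, P, R] : Set (𝔽₃^n))) '' X := by
    rintro L ⟨hL, hPL, hLS⟩
    by_cases hLT : L ⊆ T
    · exact Or.inl ⟨hL, hPL, hLT⟩
    · obtain ⟨R, hRX, hRP, hRL⟩ := h L hL hPL hLS hLT
      exact Or.inr ⟨R, hRX, (hL.eq_affineSpan_pair hPL hRL hRP.symm).symm⟩
  calc lineDeg S P ≤ _ := ncard_le_ncard hsub (toFinite _)
    _ ≤ _ := ncard_union_le _ _
    _ ≤ lineDeg T P + X.ncard := Nat.add_le_add_left (ncard_image_le (toFinite _)) _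

lemma lineDeg_le_lineDeg_add_ncard_diff (S : Set (𝔽₃^n)) {T : Set (𝔽₃^n)}
    {P : 𝔽₃^n} (hP : P ∈ T) : lineDeg S P ≤ lineDeg T P + (S \ T).ncard :=
  lineDeg_le_lineDeg_add_ncard fun _ _ _ hLS hLT ↦
    let ⟨R, hRL, hRT⟩ := not_subset.1 hLT
    ⟨R, ⟨hLS hRL, hRT⟩, (ne_of_mem_of_not_mem hP hRT).symm, hRL⟩

end LineDeg

section Greedy

variable {m n : ℕ}

def IsGreedyChoice (S : Set (𝔽₃^n)) (P : 𝔽₃^n) : Prop :=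
  P ∈ S ∧ 0 < lineDeg S P ∧ ∀ Q ∈ S, lineDeg S Q ≤ lineDeg S P

def GreedyStep (S S' : Set (𝔽₃^n)) : Prop :=
  ∃ P, IsGreedyChoice S P ∧ S' = S \ {P}

lemma greedySeq_congr {P P' : ℕ → 𝔽₃^n} {k : ℕ} (h : ∀ i < k, P i = P' i) :
    greedySeq P k = greedySeq P' k := by
  induction k with
  | zero => rfl
  | succ k ih => rw [greedySeq, greedySeq, ih fun i hi ↦ h i (by omega), h k (by omega)]

lemma reflTransGen_greedyStep_univ_iff {S : Set (𝔽₃^n)} :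
    ReflTransGen GreedyStep univ S ↔
      ∃ (k : ℕ) (P : ℕ → 𝔽₃^n),
        (∀ i < k, IsGreedyChoice (greedySeq P i) (P i)) ∧ S = greedySeq P k := by
  constructor
  · intro h
    induction h with
    | refl => exact ⟨0, fun _ ↦ 0, fun _ h ↦ absurd h (Nat.not_lt_zero _), rfl⟩
    | tail _ hstep ih =>
      obtain ⟨k, P, hP, rfl⟩ := ih
      obtain ⟨Q, hQ, rfl⟩ := hstep
      have hseq : ∀ i ≤ k, greedySeq (Function.update P k Q) i = greedySeq P i := fun i hi ↦
        greedySeq_congr fun j hj ↦ Function.update_of_ne (by omega) _ _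
      refine ⟨k + 1, Function.update P k Q, fun i hi ↦ ?_, ?_⟩
      · rcases (Nat.lt_succ_iff.1 hi).lt_or_eq with hi | rfl
        · rw [hseq i hi.le, Function.update_of_ne hi.ne]
          exact hP i hi
        · rwa [hseq i le_rfl, Function.update_self]
      · rw [greedySeq, hseq k le_rfl, Function.update_self]
  · rintro ⟨k, P, hP, rfl⟩
    induction k with
    | zero => exact .refl
    | succ k ih => exact (ih fun i hi ↦ hP i (by omega)).tail ⟨P k, hP k (by omega), rfl⟩

lemma isGreedyCapset_iff {C : Set (𝔽₃^n)} :
    IsGreedyCapset C ↔ ReflTransGen GreedyStep univ C ∧ IsCapset C := by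
  rw [reflTransGen_greedyStep_univ_iff, IsGreedyCapset]
  constructor
  · rintro ⟨k, P, hP, hC, hcap⟩
    exact ⟨⟨k, P, hP, hC⟩, hcap⟩
  · rintro ⟨⟨k, P, hP, hC⟩, hcap⟩
    exact ⟨k, P, hP, hC, hcap⟩

lemma eq_or_isGreedyChoice_of_reflTransGen {S C : Set (𝔽₃^n)}
    (h : ReflTransGen GreedyStep S C) :
    S = C ∨ ∃ P, IsGreedyChoice S P ∧ ReflTransGen GreedyStep (S \ {P}) C := by
  rcases h.cases_head with rfl | ⟨_, ⟨P, hP, rfl⟩, hrest⟩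
  · exact Or.inl rfl
  · exact Or.inr ⟨P, hP, hrest⟩

variable {φ : 𝔽₃^m →ᵃ[ZMod 3] 𝔽₃^n}

lemma IsGreedyChoice.image (hφ : Function.Injective φ) {A : Set (𝔽₃^m)}
    {y : 𝔽₃^m} (h : IsGreedyChoice A y) : IsGreedyChoice (φ '' A) (φ y) := by
  refine ⟨mem_image_of_mem φ h.1, (lineDeg_image hφ A y).symm ▸ h.2.1, ?_⟩
  rintro _ ⟨x, hx, rfl⟩
  rw [lineDeg_image hφ, lineDeg_image hφ]
  exact h.2.2 x hx

lemma GreedyStep.image (hφ : Function.Injective φ) {A A' : Set (𝔽₃^m)}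
    (h : GreedyStep A A') : GreedyStep (φ '' A) (φ '' A') := by
  obtain ⟨y, hy, rfl⟩ := h
  exact ⟨φ y, hy.image hφ, by rw [image_sdiff hφ, image_singleton]⟩

lemma IsGreedyCapset.image (hφ : Function.Injective φ) {A : Set (𝔽₃^m)}
    (hA : IsGreedyCapset A) :
    ReflTransGen GreedyStep (range φ) (φ '' A) ∧ IsCapset (φ '' A) := by
  obtain ⟨h, hcap⟩ := isGreedyCapset_iff.1 hA
  refine ⟨?_, hcap.image hφ⟩
  rw [← image_univ]
  exact ReflTransGen.lift (Set.image φ) (fun _ _ ↦ GreedyStep.image hφ) _ _ h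

end Greedy

section Hyperplane

variable {n : ℕ} {f : 𝔽₃^n →ₗ[ZMod 3] ZMod 3}

lemma lineDeg_compl_fiber_union_le {b : ZMod 3} (U : Set (𝔽₃^n)) {Q : 𝔽₃^n}
    (hQ : f Q ≠ b) : lineDeg ((f ⁻¹' {b})ᶜ ∪ U) Q ≤ lineDeg (f ⁻¹' {f Q}) Q + U.ncard :=
  lineDeg_le_lineDeg_add_ncard fun L hL hQL hLS hLQ ↦ by
    obtain ⟨R, hRL, hRb⟩ := (hL.subset_fiber_or_surjOn f hQL).resolve_left hLQ (mem_univ b)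
    refine ⟨R, (hLS hRL).resolve_left (not_not.2 hRb), fun h ↦ hQ (h ▸ hRb), hRL⟩

lemma ncard_fiber_add_lineDeg_le {P : 𝔽₃^n} {U : Set (𝔽₃^n)}
    (hU : U ⊆ f ⁻¹' {f P}) (hP : P ∈ U) {c : ZMod 3} (hc : c ≠ f P) :
    (f ⁻¹' {c}).ncard + lineDeg U P ≤ lineDeg ((f ⁻¹' {f P})ᶜ ∪ U) P := by
  set S := (f ⁻¹' {f P})ᶜ ∪ U
  set A := (fun R ↦ (line[ZMod 3, P, R] : Set (𝔽₃^n))) '' (f ⁻¹' {c})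
  have hPR {R : 𝔽₃^n} (hR : f R = c) : f P ≠ f R := fun h ↦ hc (hR ▸ h.symm)
  have hinj : InjOn (fun R ↦ (line[ZMod 3, P, R] : Set (𝔽₃^n))) (f ⁻¹' {c}) := by
    intro R (hR : f R = c) R' (hR' : f R' = c) hRR'
    have hR'R : R' ∈ (line[ZMod 3, P, R] : Set (𝔽₃^n)) := by
      dsimp only at hRR'
      rw [hRR']
      exact right_mem_affineSpan_pair _ _ _
    exact injOn_affineSpan_pair f.toAffineMap (hPR hR) (right_mem_affineSpan_pair _ _ _) hR'R
      (hR.trans hR'.symm)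
  have hA : A ⊆ {L | IsLine L ∧ P ∈ L ∧ L ⊆ S} := by
    rintro _ ⟨R, hR, rfl⟩
    refine ⟨isLine_affineSpan_pair (ne_of_apply_ne f (hPR hR)), left_mem_affineSpan_pair _ _ _,
      fun x hx ↦ ?_⟩
    by_cases hxP : f x = f P
    · rw [injOn_affineSpan_pair f.toAffineMap (hPR hR) hx (left_mem_affineSpan_pair _ _ _) hxP]
      exact Or.inr hP
    · exact Or.inl hxP
  have hmono : {L | IsLine L ∧ P ∈ L ∧ L ⊆ U} ⊆ {L | IsLine L ∧ P ∈ L ∧ L ⊆ S} :=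
    fun L ⟨hL, hPL, hLU⟩ ↦ ⟨hL, hPL, hLU.trans subset_union_right⟩
  have hdisj : Disjoint A {L | IsLine L ∧ P ∈ L ∧ L ⊆ U} := by
    refine disjoint_left.2 ?_
    rintro _ ⟨R, hR, rfl⟩ ⟨-, -, hLU⟩
    exact hPR hR (hU (hLU (right_mem_affineSpan_pair _ _ _))).symm
  calc (f ⁻¹' {c}).ncard + lineDeg U P = A.ncard + lineDeg U P := by rw [hinj.ncard_image]
    _ = (A ∪ {L | IsLine L ∧ P ∈ L ∧ L ⊆ U}).ncard :=
      (ncard_union_eq hdisj (toFinite _) (toFinite _)).symm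
    _ ≤ lineDeg S P := ncard_le_ncard (union_subset hA hmono) (toFinite _)

lemma isGreedyChoice_compl_fiber_union (hf : Function.Surjective f) {b : ZMod 3}
    {U : Set (𝔽₃^n)} (hU : U ⊆ f ⁻¹' {b}) {P : 𝔽₃^n} (hP : P ∈ U)
    (hmax : ∀ Q ∈ U, lineDeg ((f ⁻¹' {b})ᶜ ∪ U) Q ≤ lineDeg ((f ⁻¹' {b})ᶜ ∪ U) P) :
    IsGreedyChoice ((f ⁻¹' {b})ᶜ ∪ U) P := by
  have hPb : f P = b := hU hP
  have hkey : lineDeg (f ⁻¹' {b}) P + U.ncard ≤ lineDeg ((f ⁻¹' {b})ᶜ ∪ U) P := by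
    have hle := lineDeg_le_lineDeg_add_ncard_diff (f ⁻¹' {b}) hP
    have hge := ncard_fiber_add_lineDeg_le (c := b + 1) (hPb ▸ hU) hP (by simp [hPb])
    have hcard : (f ⁻¹' {b + 1}).ncard = (f ⁻¹' {b} \ U).ncard + U.ncard := by
      rw [ncard_fiber_eq hf _ b, ncard_sdiff_add_ncard_of_subset hU]
    rw [hPb] at hge
    omega
  refine ⟨Or.inr hP, by have := (ncard_pos (toFinite U)).2 ⟨P, hP⟩; omega, ?_⟩
  rintro Q (hQ | hQ)
  · calc _ ≤ lineDeg (f ⁻¹' {f Q}) Q + U.ncard := lineDeg_compl_fiber_union_le U hQ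
      _ = lineDeg (f ⁻¹' {b}) P + U.ncard := by rw [lineDeg_fiber_eq f Q P, hPb]
      _ ≤ _ := hkey
  · exact hmax Q hQ

theorem reflTransGen_greedyStep_univ_compl_fiber (hf : Function.Surjective f) (b : ZMod 3) :
    ReflTransGen GreedyStep univ (f ⁻¹' {b})ᶜ := by
  suffices h : ∀ N, ∀ U ⊆ f ⁻¹' {b}, U.ncard = N →
      ReflTransGen GreedyStep ((f ⁻¹' {b})ᶜ ∪ U) (f ⁻¹' {b})ᶜ by
    simpa using h _ _ subset_rfl rfl
  intro N
  induction N with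
  | zero =>
    intro U _ hU
    rw [(ncard_eq_zero (toFinite U)).1 hU, union_empty]
  | succ N ih =>
    intro U hUb hU
    obtain ⟨P, hP, hmax⟩ := exists_max_image U (lineDeg ((f ⁻¹' {b})ᶜ ∪ U)) (toFinite U)
      (nonempty_of_ncard_ne_zero (by omega))
    refine .head ⟨P, isGreedyChoice_compl_fiber_union hf hUb hP hmax, ?_⟩
      (ih (U \ {P}) (sdiff_subset.trans hUb) ?_)
    · rw [union_sdiff_distrib, sdiff_singleton_eq_self (notMem_compl_iff.2 (hUb hP))]
    · rw [ncard_sdiff_singleton_of_mem hP, hU, Nat.add_sub_cancel]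

end Hyperplane

section SeparatedFibers

variable {n : ℕ} {f : 𝔽₃^n →ₗ[ZMod 3] ZMod 3} {c₁ c₂ : ZMod 3}
  {S₁ S₂ : Set (𝔽₃^n)}

lemma lineDeg_union_eq_left (hc : c₁ ≠ c₂) (hS₁ : S₁ ⊆ f ⁻¹' {c₁}) (hS₂ : S₂ ⊆ f ⁻¹' {c₂})
    {P : 𝔽₃^n} (hP : f P = c₁) : lineDeg (S₁ ∪ S₂) P = lineDeg S₁ P := by
  have hthird : ∀ c c' : ZMod 3, ∃ c₀, c₀ ≠ c ∧ c₀ ≠ c' := by decide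
  obtain ⟨c₀, hc₀₁, hc₀₂⟩ := hthird c₁ c₂
  refine congrArg ncard (ext fun L ↦ ⟨fun ⟨hL, hPL, hLS⟩ ↦ ⟨hL, hPL, fun x hx ↦ ?_⟩,
    fun ⟨hL, hPL, hLS⟩ ↦ ⟨hL, hPL, hLS.trans subset_union_left⟩⟩)
  -- `L` misses the fiber `c₀`, so it cannot be transversal
  rcases hL.subset_fiber_or_surjOn f hPL with hfib | hsurj
  · refine (hLS hx).resolve_right fun hx₂ ↦ hc ?_
    rw [← hP, ← hfib hx, hS₂ hx₂]
  · obtain ⟨y, hyL, hy⟩ := hsurj (mem_univ c₀)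
    rcases hLS hyL with hy₁ | hy₂
    · exact absurd (hy.symm.trans (hS₁ hy₁)) hc₀₁
    · exact absurd (hy.symm.trans (hS₂ hy₂)) hc₀₂

lemma IsCapset.union_of_fibers (hc : c₁ ≠ c₂) (hS₁ : S₁ ⊆ f ⁻¹' {c₁}) (hS₂ : S₂ ⊆ f ⁻¹' {c₂})
    (hcap₁ : IsCapset S₁) (hcap₂ : IsCapset S₂) : IsCapset (S₁ ∪ S₂) := by
  rw [isCapset_iff_lineDeg_eq_zero] at hcap₁ hcap₂ ⊢
  rintro P (hP | hP)
  · rw [lineDeg_union_eq_left hc hS₁ hS₂ (hS₁ hP), hcap₁ P hP]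
  · rw [union_comm, lineDeg_union_eq_left hc.symm hS₂ hS₁ (hS₂ hP), hcap₂ P hP]

lemma greedyStep_union_left (hc : c₁ ≠ c₂) (hS₁ : S₁ ⊆ f ⁻¹' {c₁}) (hS₂ : S₂ ⊆ f ⁻¹' {c₂})
    {P : 𝔽₃^n} (hP : IsGreedyChoice S₁ P)
    (hle : ∀ Q ∈ S₂, lineDeg S₂ Q ≤ lineDeg S₁ P) : GreedyStep (S₁ ∪ S₂) (S₁ \ {P} ∪ S₂) := by
  have hdeg₁ : ∀ Q ∈ S₁, lineDeg (S₁ ∪ S₂) Q = lineDeg S₁ Q := fun Q hQ ↦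
    lineDeg_union_eq_left hc hS₁ hS₂ (hS₁ hQ)
  have hdeg₂ : ∀ Q ∈ S₂, lineDeg (S₁ ∪ S₂) Q = lineDeg S₂ Q := fun Q hQ ↦ by
    rw [union_comm]
    exact lineDeg_union_eq_left hc.symm hS₂ hS₁ (hS₂ hQ)
  refine ⟨P, ⟨Or.inl hP.1, hdeg₁ P hP.1 ▸ hP.2.1, ?_⟩, ?_⟩
  · rintro Q (hQ | hQ)
    · rw [hdeg₁ Q hQ, hdeg₁ P hP.1]
      exact hP.2.2 Q hQ
    · rw [hdeg₂ Q hQ, hdeg₁ P hP.1]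
      exact hle Q hQ
  · rw [union_sdiff_distrib, sdiff_singleton_eq_self fun h ↦ hc ((hS₁ hP.1).symm.trans (hS₂ h))]

theorem reflTransGen_greedyStep_union (hc : c₁ ≠ c₂) (hS₁ : S₁ ⊆ f ⁻¹' {c₁})
    (hS₂ : S₂ ⊆ f ⁻¹' {c₂}) {C₁ C₂ : Set (𝔽₃^n)} (h₁ : ReflTransGen GreedyStep S₁ C₁)
    (h₂ : ReflTransGen GreedyStep S₂ C₂) (hcap₁ : IsCapset C₁) (hcap₂ : IsCapset C₂) :
    ReflTransGen GreedyStep (S₁ ∪ S₂) (C₁ ∪ C₂) := by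
  obtain ⟨N, hN⟩ : ∃ N, S₁.ncard + S₂.ncard = N := ⟨_, rfl⟩
  induction N using Nat.strong_induction_on generalizing S₁ S₂ with
  | _ N ih =>
  have step₁ (P : 𝔽₃^n) (hP : IsGreedyChoice S₁ P)
      (hrest : ReflTransGen GreedyStep (S₁ \ {P}) C₁)
      (hle : ∀ Q ∈ S₂, lineDeg S₂ Q ≤ lineDeg S₁ P) :
      ReflTransGen GreedyStep (S₁ ∪ S₂) (C₁ ∪ C₂) := by
    refine .head (greedyStep_union_left hc hS₁ hS₂ hP hle)
      (ih _ ?_ (sdiff_subset.trans hS₁) hS₂ hrest h₂ rfl)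
    have := ncard_sdiff_singleton_lt_of_mem hP.1
    omega
  have step₂ (P : 𝔽₃^n) (hP : IsGreedyChoice S₂ P)
      (hrest : ReflTransGen GreedyStep (S₂ \ {P}) C₂)
      (hle : ∀ Q ∈ S₁, lineDeg S₁ Q ≤ lineDeg S₂ P) :
      ReflTransGen GreedyStep (S₁ ∪ S₂) (C₁ ∪ C₂) := by
    have hstep := greedyStep_union_left hc.symm hS₂ hS₁ hP hle
    rw [union_comm S₂, union_comm (S₂ \ {P})] at hstep
    refine .head hstep (ih _ ?_ hS₁ (sdiff_subset.trans hS₂) h₁ hrest rfl)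
    have := ncard_sdiff_singleton_lt_of_mem hP.1
    omega
  have capset_le {S : Set (𝔽₃^n)} (hS : IsCapset S) (d : ℕ) : ∀ Q ∈ S, lineDeg S Q ≤ d :=
    fun Q hQ ↦ (isCapset_iff_lineDeg_eq_zero.1 hS Q hQ).trans_le (Nat.zero_le d)
  rcases eq_or_isGreedyChoice_of_reflTransGen h₁ with rfl | ⟨P₁, hP₁, hrest₁⟩ <;>
    rcases eq_or_isGreedyChoice_of_reflTransGen h₂ with rfl | ⟨P₂, hP₂, hrest₂⟩
  · exact .refl
  · exact step₂ P₂ hP₂ hrest₂ (capset_le hcap₁ _)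
  · exact step₁ P₁ hP₁ hrest₁ (capset_le hcap₂ _)
  · rcases le_total (lineDeg S₂ P₂) (lineDeg S₁ P₁) with h | h
    · exact step₁ P₁ hP₁ hrest₁ fun Q hQ ↦ (hP₂.2.2 Q hQ).trans h
    · exact step₂ P₂ hP₂ hrest₂ fun Q hQ ↦ (hP₁.2.2 Q hQ).trans h

end SeparatedFibers

theorem isGreedyCapset_of_fibers {n : ℕ} {f : 𝔽₃^n →ₗ[ZMod 3] ZMod 3}
    (hf : Function.Surjective f) {b : ZMod 3} {C : Set (𝔽₃^n)}
    (hC : C ∩ f ⁻¹' {b} = ∅)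
    (h₁ : ReflTransGen GreedyStep (f ⁻¹' {b + 1}) (C ∩ f ⁻¹' {b + 1}))
    (h₂ : ReflTransGen GreedyStep (f ⁻¹' {b + 2}) (C ∩ f ⁻¹' {b + 2}))
    (hcap₁ : IsCapset (C ∩ f ⁻¹' {b + 1})) (hcap₂ : IsCapset (C ∩ f ⁻¹' {b + 2})) :
    IsGreedyCapset C := by
  have hne : b + 1 ≠ b + 2 := by simp only [ne_eq, add_right_inj]; decide
  have hsplit : (f ⁻¹' {b})ᶜ = f ⁻¹' {b + 1} ∪ f ⁻¹' {b + 2} := by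
    have hvalues : ∀ c b : ZMod 3, c ≠ b ↔ c = b + 1 ∨ c = b + 2 := by decide
    ext x
    exact hvalues (f x) b
  have hCsplit : C = C ∩ f ⁻¹' {b + 1} ∪ C ∩ f ⁻¹' {b + 2} := by
    rw [← inter_union_distrib_left, ← hsplit, left_eq_inter, subset_compl_iff_disjoint_right,
      disjoint_iff_inter_eq_empty]
    exact hC
  rw [isGreedyCapset_iff, hCsplit]
  refine ⟨(reflTransGen_greedyStep_univ_compl_fiber hf b).trans ?_,
    hcap₁.union_of_fibers hne inter_subset_right inter_subset_right hcap₂⟩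
  rw [hsplit]
  exact reflTransGen_greedyStep_union hne subset_rfl subset_rfl h₁ h₂ hcap₁ hcap₂

theorem greedy_capsets_stmt6_general {n : ℕ} (C : Set (Fin n → ZMod 3))
    (H₀ H₁ H₂ : Set (Fin n → ZMod 3)) (hpar : ParallelTriple H₀ H₁ H₂)
    (hdisj : C ∩ H₀ = ∅)
    (h1 : ∃ φ : (Fin (n - 1) → ZMod 3) →ᵃ[ZMod 3] (Fin n → ZMod 3),
      Function.Injective φ ∧ Set.range φ = H₁ ∧ IsGreedyCapset (φ ⁻¹' (C ∩ H₁)))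
    (h2 : ∃ φ : (Fin (n - 1) → ZMod 3) →ᵃ[ZMod 3] (Fin n → ZMod 3),
      Function.Injective φ ∧ Set.range φ = H₂ ∧ IsGreedyCapset (φ ⁻¹' (C ∩ H₂))) :
    IsGreedyCapset C := by
  obtain ⟨a, b, ha, rfl, rfl, rfl⟩ := hpar
  obtain ⟨φ₁, hφ₁, hr₁, hC₁⟩ := h1
  obtain ⟨φ₂, hφ₂, hr₂, hC₂⟩ := h2
  obtain ⟨hD₁, hcap₁⟩ := hC₁.image hφ₁
  obtain ⟨hD₂, hcap₂⟩ := hC₂.image hφ₂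
  rw [image_preimage_eq_of_subset (hr₁ ▸ inter_subset_right)] at hD₁ hcap₁
  rw [image_preimage_eq_of_subset (hr₂ ▸ inter_subset_right)] at hD₂ hcap₂
  rw [hr₁] at hD₁
  rw [hr₂] at hD₂
  -- `dotProductBilin _ _ a` is `x ↦ ∑ i, a i * x i`, so `H₀, H₁, H₂` are its fibers by definition
  have hf : Function.Surjective (dotProductBilin (ZMod 3) (ZMod 3) a) := by
    refine LinearMap.surjective_iff_ne_zero.2 fun hf ↦ ha (funext fun j ↦ ?_)
    simpa using LinearMap.congr_fun hf (Pi.single j 1)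
  exact isGreedyCapset_of_fibers hf hdisj hD₁ hD₂ hcap₁ hcap₂

/-- If `C ⊆ 𝔽₃ⁿ` (`n ≥ 1`) misses an affine hyperplane `H₀` and, for each of
the two parallel hyperplanes `H₁, H₂`, some affine bijection `φᵢ : 𝔽₃ⁿ⁻¹ → Hᵢ` pulls
`C ∩ Hᵢ` back to a greedy capset of `𝔽₃ⁿ⁻¹`, then `C` is a greedy capset of `𝔽₃ⁿ`. -/
theorem greedy_capsets_stmt6 {n : ℕ} (hn : 1 ≤ n) (C : Set (Fin n → ZMod 3))
    (H₀ H₁ H₂ : Set (Fin n → ZMod 3)) (hpar : ParallelTriple H₀ H₁ H₂)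
    (hdisj : C ∩ H₀ = ∅)
    (h1 : ∃ φ : (Fin (n - 1) → ZMod 3) →ᵃ[ZMod 3] (Fin n → ZMod 3),
      Function.Injective φ ∧ Set.range φ = H₁ ∧ IsGreedyCapset (φ ⁻¹' (C ∩ H₁)))
    (h2 : ∃ φ : (Fin (n - 1) → ZMod 3) →ᵃ[ZMod 3] (Fin n → ZMod 3),
      Function.Injective φ ∧ Set.range φ = H₂ ∧ IsGreedyCapset (φ ⁻¹' (C ∩ H₂))) :
    IsGreedyCapset C :=
  greedy_capsets_stmt6_general C H₀ H₁ H₂ hpar hdisj h1 h2
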